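/- arXiv:1610.08824 — 4 statements merged into one kernel-verified Lean document; each statement's English description precedes it below -/
import Mathlib

section
/- In the discontinuous Galerkin setting, for all m ∈ {1,…,M} and every ξ ∈ 𝒰^τ with ξ(t₀−) := 0, the quantity E_d^m := Q_m,ρ[(∂ₜM₀ + M₁)ξ, ξ] + ⟨M₀[ξ]_{m−1}^0, ξ(t_{m−1}+)⟩_H satisfies E_d^m ≥ (1/2)[⟨M₀ξ(t_m−), ξ(t_m−)⟩ e^{−2ρτ_m} − ⟨M₀ξ(t_{m−1}−), ξ(t_{m−1}−)⟩ + ⟨M₀[ξ]_{m−1}^0, [ξ]_{m−1}^0⟩] + γ ⦀ξ⦀²_{Q,ρ,m}. -/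
open MeasureTheory Real
open scoped RealInnerProductSpace

/-!
On `I_m` the function `P(s) = ⟪M₀ ξ(s), ξ(s)⟫` is a real polynomial of degree `≤ 2q`, and
self-adjointness of `M₀` gives `⟪∂ₜ(M₀ ξ), ξ⟫ = P'/2`. Coercivity of `ρM₀ + M₁` then bounds the
integrand at every node below by `(P' - 2ρP)/2 + γ|ξ|²`. The quadrature is exact on `P' - 2ρP`,
and since `P(s) e^{-2ρ(s - t_{m-1})}` is an antiderivative of its weighted form, it yields
`P(t_m) e^{-2ρτ_m} - P(t_{m-1})`. The jump term is the polarization identity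
`⟪M₀(x - z), x⟫ = (⟪M₀x, x⟫ - ⟪M₀z, z⟫ + ⟪M₀(x - z), x - z⟫)/2`.
-/

/-- `f` is an `H`-valued polynomial of degree at most `q`. -/
def IsPolyDeg {H : Type*} [NormedAddCommGroup H] [InnerProductSpace ℝ H]
    (q : ℕ) (f : ℝ → H) : Prop :=
  ∃ c : Fin (q + 1) → H, ∀ s : ℝ, f s = ∑ i : Fin (q + 1), s ^ (i : ℕ) • c i

/-- A right-sided Gauß–Radau quadrature with `q+1` nodes on the interval `(a,b]` with
weighting function `w`: nodes `a < node₀ < ⋯ < node_q = b`, positive weights, exact for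
polynomials of degree at most `2q`. -/
def IsGaussRadauOn (q : ℕ) (w : ℝ → ℝ) (a b : ℝ) (node wt : Fin (q + 1) → ℝ) : Prop :=
  StrictMono node ∧ (∀ i, node i ∈ Set.Ioc a b) ∧ node (Fin.last q) = b ∧
    (∀ i, 0 < wt i) ∧
    ∀ p : Polynomial ℝ, p.natDegree ≤ 2 * q →
      ∫ s in Set.Ioo a b, p.eval s * w s = ∑ i, wt i * p.eval (node i)

open Polynomial Finset

namespace IsPolyDeg

variable {H : Type*} [NormedAddCommGroup H] [InnerProductSpace ℝ H] {q : ℕ} {u v : ℝ → H}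

theorem differentiable (hu : IsPolyDeg q u) : Differentiable ℝ u := by
  obtain ⟨c, hc⟩ := hu
  rw [show u = fun s => ∑ i : Fin (q + 1), s ^ (i : ℕ) • c i from funext hc]
  fun_prop

theorem exists_polynomial_eval_eq_inner (hu : IsPolyDeg q u) (hv : IsPolyDeg q v)
    (A : H →L[ℝ] H) : ∃ P : ℝ[X], P.natDegree ≤ 2 * q ∧ ∀ s, P.eval s = ⟪A (u s), v s⟫ := by
  obtain ⟨c, hc⟩ := hu
  obtain ⟨d, hd⟩ := hv
  refine ⟨∑ i : Fin (q + 1), ∑ j : Fin (q + 1), C ⟪A (c i), d j⟫ * X ^ ((i : ℕ) + j), ?_, ?_⟩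
  · refine natDegree_sum_le_of_forall_le _ _ fun i _ => natDegree_sum_le_of_forall_le _ _
      fun j _ => (natDegree_C_mul_X_pow_le _ _).trans ?_
    omega
  · intro s
    simp only [hc, hd, map_sum, map_smul, sum_inner, inner_sum, real_inner_smul_left,
      real_inner_smul_right, eval_finsetSum, eval_mul, eval_C, eval_pow, eval_X, pow_add]
    rw [sum_comm]
    exact sum_congr rfl fun i _ => sum_congr rfl fun j _ => by ring

end IsPolyDeg

theorem LinearMap.IsSymmetric.hasDerivAt_inner_apply_self {H : Type*} [NormedAddCommGroup H]
    [InnerProductSpace ℝ H] {A : H →L[ℝ] H} (hA : (A : H →ₗ[ℝ] H).IsSymmetric) {u : ℝ → H}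
    {s : ℝ} (hu : DifferentiableAt ℝ u s) :
    HasDerivAt (fun s => ⟪A (u s), u s⟫) (2 * ⟪deriv (fun s => A (u s)) s, u s⟫) s := by
  have hAu : HasDerivAt (fun s => A (u s)) (A (deriv u s)) s :=
    A.hasFDerivAt.comp_hasDerivAt s hu.hasDerivAt
  refine (hAu.inner ℝ hu.hasDerivAt).congr_deriv ?_
  rw [hAu.deriv, hA.apply_clm, real_inner_comm]
  ring

theorem integral_Ioo_deriv_add_mul_mul_exp {f f' : ℝ → ℝ} {a b : ℝ} (c : ℝ) (hab : a ≤ b)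
    (hf : ∀ s, HasDerivAt f (f' s) s) (hf' : Continuous f') :
    ∫ s in Set.Ioo a b, (f' s + c * f s) * exp (c * (s - a))
      = f b * exp (c * (b - a)) - f a := by
  have hcont : Continuous f := continuous_iff_continuousAt.2 fun s => (hf s).continuousAt
  have hderiv : ∀ s, HasDerivAt (fun s => f s * exp (c * (s - a)))
      ((f' s + c * f s) * exp (c * (s - a))) s := by
    intro s
    have hexp : HasDerivAt (fun s => exp (c * (s - a))) (exp (c * (s - a)) * c) s := by
      simpa using (((hasDerivAt_id s).sub_const a).const_mul c).exp
    exact ((hf s).mul hexp).congr_deriv (by ring)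
  rw [← integral_Ioc_eq_integral_Ioo, ← intervalIntegral.integral_of_le hab,
    intervalIntegral.integral_eq_sub_of_hasDerivAt (fun s _ => hderiv s)
      ((by fun_prop : Continuous _).intervalIntegrable _ _)]
  simp

namespace IsGaussRadauOn

variable {q : ℕ} {w : ℝ → ℝ} {a b : ℝ} {node wt : Fin (q + 1) → ℝ}

theorem lt (h : IsGaussRadauOn q w a b node wt) : a < b :=
  (h.2.1 0).1.trans_le (h.2.1 0).2

theorem wt_pos (h : IsGaussRadauOn q w a b node wt) (i : Fin (q + 1)) : 0 < wt i :=
  h.2.2.2.1 i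

theorem integral_eq_sum (h : IsGaussRadauOn q w a b node wt) {p : ℝ[X]}
    (hp : p.natDegree ≤ 2 * q) :
    ∫ s in Set.Ioo a b, p.eval s * w s = ∑ i, wt i * p.eval (node i) :=
  h.2.2.2.2 p hp

theorem sum_mul_eval_derivative_add {c : ℝ}
    (h : IsGaussRadauOn q (fun s => exp (c * (s - a))) a b node wt) {P : ℝ[X]}
    (hP : P.natDegree ≤ 2 * q) :
    ∑ i, wt i * (derivative P + C c * P).eval (node i)
      = P.eval b * exp (c * (b - a)) - P.eval a := by
  have hdeg : (derivative P + C c * P).natDegree ≤ 2 * q :=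
    natDegree_add_le_of_degree_le ((natDegree_derivative_le P).trans (by omega))
      ((natDegree_C_mul_le c P).trans hP)
  rw [← h.integral_eq_sum hdeg, ← integral_Ioo_deriv_add_mul_mul_exp c h.lt.le
    (fun s => P.hasDerivAt s) P.derivative.continuous]
  simp only [eval_add, eval_mul, eval_C]

theorem energy_le {H : Type*} [NormedAddCommGroup H] [InnerProductSpace ℝ H]
    {A B : H →L[ℝ] H} (hA : (A : H →ₗ[ℝ] H).IsSymmetric) {ρ γ : ℝ}
    (hpos : ∀ x : H, γ * ⟪x, x⟫ ≤ ⟪ρ • A x + B x, x⟫) {u : ℝ → H} (hu : IsPolyDeg q u)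
    (h : IsGaussRadauOn q (fun s => exp (-2 * ρ * (s - a))) a b node wt) :
    (1 / 2) * (⟪A (u b), u b⟫ * exp (-2 * ρ * (b - a)) - ⟪A (u a), u a⟫)
        + γ * ∑ i, wt i * ⟪u (node i), u (node i)⟫
      ≤ ∑ i, wt i * ⟪deriv (fun s => A (u s)) (node i) + B (u (node i)), u (node i)⟫ := by
  obtain ⟨P, hPdeg, hP⟩ := hu.exists_polynomial_eval_eq_inner hu A
  have hPderiv : ∀ s, (derivative P).eval s = 2 * ⟪deriv (fun s => A (u s)) s, u s⟫ := by
    intro s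
    have hPu : (fun s => P.eval s) = fun s => ⟪A (u s), u s⟫ := funext hP
    exact (P.hasDerivAt s).unique (hPu ▸ hA.hasDerivAt_inner_apply_self (hu.differentiable s))
  have hpointwise : ∀ s, (1 / 2) * (derivative P + C (-2 * ρ) * P).eval s + γ * ⟪u s, u s⟫
      ≤ ⟪deriv (fun s => A (u s)) s + B (u s), u s⟫ := by
    intro s
    have := hpos (u s)
    rw [inner_add_left, real_inner_smul_left] at this
    rw [eval_add, eval_mul, eval_C, hPderiv, hP, inner_add_left]
    linarith
  calc (1 / 2) * (⟪A (u b), u b⟫ * exp (-2 * ρ * (b - a)) - ⟪A (u a), u a⟫)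
        + γ * ∑ i, wt i * ⟪u (node i), u (node i)⟫
      = ∑ i, wt i * ((1 / 2) * (derivative P + C (-2 * ρ) * P).eval (node i)
          + γ * ⟪u (node i), u (node i)⟫) := by
        rw [← hP, ← hP, ← h.sum_mul_eval_derivative_add hPdeg, mul_sum, mul_sum,
          ← sum_add_distrib]
        exact sum_congr rfl fun i _ => by ring
    _ ≤ _ := sum_le_sum fun i _ => mul_le_mul_of_nonneg_left (hpointwise _) (h.wt_pos i).le

end IsGaussRadauOn

theorem LinearMap.IsSymmetric.inner_map_sub_left_self {H : Type*} [NormedAddCommGroup H]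
    [InnerProductSpace ℝ H] {A : H →L[ℝ] H} (hA : (A : H →ₗ[ℝ] H).IsSymmetric) (x z : H) :
    ⟪A (x - z), x⟫ = (1 / 2) * (⟪A x, x⟫ - ⟪A z, z⟫ + ⟪A (x - z), x - z⟫) := by
  simp only [map_sub, inner_sub_left, inner_sub_right]
  rw [hA.apply_clm z x, real_inner_comm (A x) z]
  ring

/-- The piece of `ξ` on `I_m = (t_{m-1}, t_m]` is the polynomial `ξ m`, so
`ξ(t_{m-1}+) = ξ m (t_{m-1})`, `ξ(t_m-) = ξ m (t m)`, and `ξ(t_{m-1}-) = ξ (m-1) (t_{m-1})` for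
`m ≥ 2` while `ξ(t₀-) = 0`. -/
theorem stmt_2_general {H : Type*} [NormedAddCommGroup H] [InnerProductSpace ℝ H]
    (M₀ M₁ : H →L[ℝ] H)
    (hM₀sa : ∀ x y : H, ⟪M₀ x, y⟫ = ⟪x, M₀ y⟫)
    (ρ γ : ℝ)
    (hpos : ∀ x : H, γ * ⟪x, x⟫ ≤ ⟪ρ • M₀ x + M₁ x, x⟫)
    (q N : ℕ) (t : ℕ → ℝ)
    (node wt : ℕ → Fin (q + 1) → ℝ)
    (hGR : ∀ m, 1 ≤ m → m ≤ N →
      IsGaussRadauOn q (fun s => Real.exp (-2 * ρ * (s - t (m - 1)))) (t (m - 1)) (t m)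
        (node m) (wt m))
    (ξ : ℕ → ℝ → H) (hξ : ∀ m, 1 ≤ m → m ≤ N → IsPolyDeg q (ξ m)) :
    ∀ m, 1 ≤ m → m ≤ N →
      (1 / 2) * (⟪M₀ (ξ m (t m)), ξ m (t m)⟫ * Real.exp (-2 * ρ * (t m - t (m - 1)))
            - ⟪M₀ (if m = 1 then (0 : H) else ξ (m - 1) (t (m - 1))),
                (if m = 1 then (0 : H) else ξ (m - 1) (t (m - 1)))⟫
            + ⟪M₀ (ξ m (t (m - 1)) - (if m = 1 then (0 : H) else ξ (m - 1) (t (m - 1)))),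
                ξ m (t (m - 1)) - (if m = 1 then (0 : H) else ξ (m - 1) (t (m - 1)))⟫)
          + γ * (∑ i, wt m i * ⟪ξ m (node m i), ξ m (node m i)⟫)
        ≤ (∑ i, wt m i *
              ⟪deriv (fun s => M₀ (ξ m s)) (node m i) + M₁ (ξ m (node m i)),
                ξ m (node m i)⟫)
          + ⟪M₀ (ξ m (t (m - 1)) - (if m = 1 then (0 : H) else ξ (m - 1) (t (m - 1)))),
              ξ m (t (m - 1))⟫ := by
  intro m hm1 hmN
  have henergy := (hGR m hm1 hmN).energy_le hM₀sa hpos (hξ m hm1 hmN)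
  generalize (if m = 1 then (0 : H) else ξ (m - 1) (t (m - 1))) = z
  have hjump := LinearMap.IsSymmetric.inner_map_sub_left_self hM₀sa (ξ m (t (m - 1))) z
  linarith

/-- Lemma `lem:lhs2`: lower bound for the discrete energy
`E_d^m = Q_{m,ρ}[(∂ₜM₀+M₁)ξ, ξ] + ⟨M₀[ξ]_{m-1}^0, ξ(t_{m-1}+)⟩` for piecewise polynomial
`ξ ∈ 𝒰^τ` (with the convention `ξ(t₀-) = 0`).  The piece of `ξ` on `I_m = (t_{m-1}, t_m]`
is the polynomial `ξ m`, so `ξ(t_{m-1}+) = ξ m (t_{m-1})`, `ξ(t_m-) = ξ m (t m)` and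
`ξ(t_{m-1}-) = ξ (m-1) (t_{m-1})` for `m ≥ 2`. -/
theorem stmt_2 {H : Type*} [NormedAddCommGroup H] [InnerProductSpace ℝ H]
    (M₀ M₁ : H →L[ℝ] H)
    (hM₀sa : ∀ x y : H, ⟪M₀ x, y⟫ = ⟪x, M₀ y⟫)
    (ρ γ : ℝ) (hρ : 0 < ρ) (hγ : 0 < γ)
    (hpos : ∀ x : H, γ * ⟪x, x⟫ ≤ ⟪ρ • M₀ x + M₁ x, x⟫)
    (q N : ℕ) (hN : 1 ≤ N) (t : ℕ → ℝ) (ht0 : t 0 = 0)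
    (htmono : ∀ m, m < N → t m < t (m + 1))
    (node wt : ℕ → Fin (q + 1) → ℝ)
    (hGR : ∀ m, 1 ≤ m → m ≤ N →
      IsGaussRadauOn q (fun s => Real.exp (-2 * ρ * (s - t (m - 1)))) (t (m - 1)) (t m)
        (node m) (wt m))
    (ξ : ℕ → ℝ → H) (hξ : ∀ m, 1 ≤ m → m ≤ N → IsPolyDeg q (ξ m)) :
    ∀ m, 1 ≤ m → m ≤ N →
      (1 / 2) * (⟪M₀ (ξ m (t m)), ξ m (t m)⟫ * Real.exp (-2 * ρ * (t m - t (m - 1)))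
            - ⟪M₀ (if m = 1 then (0 : H) else ξ (m - 1) (t (m - 1))),
                (if m = 1 then (0 : H) else ξ (m - 1) (t (m - 1)))⟫
            + ⟪M₀ (ξ m (t (m - 1)) - (if m = 1 then (0 : H) else ξ (m - 1) (t (m - 1)))),
                ξ m (t (m - 1)) - (if m = 1 then (0 : H) else ξ (m - 1) (t (m - 1)))⟫)
          + γ * (∑ i, wt m i * ⟪ξ m (node m i), ξ m (node m i)⟫)
        ≤ (∑ i, wt m i *
              ⟪deriv (fun s => M₀ (ξ m s)) (node m i) + M₁ (ξ m (node m i)),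
                ξ m (node m i)⟫)
          + ⟪M₀ (ξ m (t (m - 1)) - (if m = 1 then (0 : H) else ξ (m - 1) (t (m - 1)))),
              ξ m (t (m - 1))⟫ :=
  stmt_2_general M₀ M₁ hM₀sa ρ γ hpos q N t node wt hGR ξ hξ
end

section
/- Let ρ > 0, q ≥ 1, let t₀ < t₁ < ⋯ < t_q = 1 and w₀,…,w_q be the nodes and weights of the right-sided Gauß–Radau quadrature with q+1 nodes on (0,1] with weighting function t ↦ e^{−2ρt} (exact for polynomials of degree ≤ 2q). Let H be a real Hilbert space, p an H-valued polynomial of degree ≤ q on (0,1), and let p̃ be the Lagrange interpolant at the nodes (t_i) of the function t ↦ p(t)/t. Then ⟨p′, p̃⟩_ρ + ⟨p(0), p̃(0)⟩_H ≥ (1/2)( |p(1)|_H² e^{−2ρ} + ⟨p̃, p̃⟩_ρ ) + ρ⟨p, p̃⟩_ρ ≥ (1/2)( |p(1)|_H² e^{−2ρ} + ⟨p, p⟩_ρ ) + ρ⟨p, p⟩_ρ, where ⟨a,b⟩_ρ = ∫₀¹ ⟨a(t), b(t)⟩_H e^{−2ρt} dt. -/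
/-!
All integrands are polynomials of degree `≤ 2q`, so every integral equals its quadrature sum,
and at the nodes `p̃ = p / t` with `0 < t ≤ 1`; this gives the first inequality node by node.

For the second, put `u = ‖p‖² = u(0) + t r(t)`. Integrating `r` by parts against `e^{-2ρt}`
cancels all terms containing `r`, so the difference of the two sides is `u(0)` times a constant
of the quadrature alone (here `p̃(0) = p'(0) + L(0) p(0)`, `L` the interpolant of `1/t`). That
constant is `ρ ω(0)⁻² ∫₀¹ (t - 1) σ(t)² e^{-2ρt} dt ≤ 0`, where `ω = (t - 1) σ` is the nodal
polynomial of the Radau nodes.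
-/

open MeasureTheory Real
open scoped RealInnerProductSpace

/-- The right-sided Gauß–Radau quadrature with `q+1` nodes on `(0,1]` with weighting
function `t ↦ exp(-2ρt)`: nodes `0 < t₀ < ⋯ < t_q = 1`, positive weights, exact for
polynomials of degree at most `2q`. -/
def IsGaussRadau01 (q : ℕ) (ρ : ℝ) (t w : Fin (q + 1) → ℝ) : Prop :=
  (∀ i, t i ∈ Set.Ioc (0 : ℝ) 1) ∧ StrictMono t ∧ t (Fin.last q) = 1 ∧ (∀ i, 0 < w i) ∧
    ∀ p : Polynomial ℝ, p.natDegree ≤ 2 * q →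
      ∫ x in Set.Ioo (0 : ℝ) 1, p.eval x * Real.exp (-2 * ρ * x) = ∑ i, w i * p.eval (t i)

open Polynomial Finset Lagrange

theorem integrableOn_eval_mul_exp (P : ℝ[X]) (ρ : ℝ) :
    IntegrableOn (fun x => P.eval x * Real.exp (-2 * ρ * x)) (Set.Ioo (0 : ℝ) 1) :=
  (by fun_prop : Continuous fun x => P.eval x * Real.exp (-2 * ρ * x)).integrableOn_Icc.mono_set
    Set.Ioo_subset_Icc_self

noncomputable def weightedIntegral (ρ : ℝ) : ℝ[X] →ₗ[ℝ] ℝ where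
  toFun P := ∫ x in Set.Ioo (0 : ℝ) 1, P.eval x * Real.exp (-2 * ρ * x)
  map_add' P Q := by
    simp only [eval_add, add_mul]
    exact integral_add (integrableOn_eval_mul_exp P ρ) (integrableOn_eval_mul_exp Q ρ)
  map_smul' c P := by
    simp only [eval_smul, smul_eq_mul, mul_assoc, RingHom.id_apply]
    exact integral_const_mul c _

theorem weightedIntegral_apply (ρ : ℝ) (P : ℝ[X]) :
    weightedIntegral ρ P = ∫ x in Set.Ioo (0 : ℝ) 1, P.eval x * Real.exp (-2 * ρ * x) :=
  rfl

theorem weightedIntegral_derivative (ρ : ℝ) (P : ℝ[X]) :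
    weightedIntegral ρ (derivative P)
      = 2 * ρ * weightedIntegral ρ P + P.eval 1 * Real.exp (-2 * ρ) - P.eval 0 := by
  have hderiv : ∀ x ∈ Set.uIcc (0 : ℝ) 1, HasDerivAt (fun y => P.eval y * Real.exp (-2 * ρ * y))
      ((derivative P - C (2 * ρ) * P).eval x * Real.exp (-2 * ρ * x)) x := fun x _ => by
    have hexp := ((hasDerivAt_id' x).const_mul (-2 * ρ)).exp
    refine ((P.hasDerivAt x).fun_mul hexp).congr_deriv ?_
    simp only [eval_sub, eval_mul, eval_C]
    ring
  have hftc := intervalIntegral.integral_eq_sub_of_hasDerivAt hderiv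
    ((by fun_prop : Continuous fun x =>
      (derivative P - C (2 * ρ) * P).eval x * Real.exp (-2 * ρ * x)).intervalIntegrable 0 1)
  rw [intervalIntegral.integral_of_le zero_le_one, integral_Ioc_eq_integral_Ioo,
    ← weightedIntegral_apply, ← smul_eq_C_mul, map_sub, map_smul] at hftc
  simp only [mul_zero, Real.exp_zero, mul_one, smul_eq_mul] at hftc
  linarith

theorem Polynomial.Monic.divX {R : Type*} [Semiring R] {P : R[X]} (hP : P.Monic)
    (hdeg : P.natDegree ≠ 0) : P.divX.Monic := by
  show P.divX.coeff P.divX.natDegree = 1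
  rw [natDegree_divX_eq_natDegree_tsub_one, coeff_divX,
    Nat.sub_add_cancel (Nat.one_le_iff_ne_zero.mpr hdeg)]
  exact hP

section ReciprocalInterpolant

variable {q : ℕ} {t : Fin (q + 1) → ℝ}

/-- `(1 - ω / ω(0)) / X` for the nodal polynomial `ω`: the interpolant of `s ↦ s⁻¹` at the
nodes `t`. -/
noncomputable def reciprocalInterpolant (t : Fin (q + 1) → ℝ) : ℝ[X] :=
  -C ((nodal univ t).eval 0)⁻¹ * (nodal univ t).divX

theorem natDegree_reciprocalInterpolant_le : (reciprocalInterpolant t).natDegree ≤ q := by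
  refine natDegree_mul_le.trans ?_
  rw [← C_neg, natDegree_C, natDegree_divX_eq_natDegree_tsub_one, natDegree_nodal, card_univ,
    Fintype.card_fin]
  omega

theorem X_mul_reciprocalInterpolant (ht0 : ∀ i, t i ≠ 0) :
    X * reciprocalInterpolant t = 1 - C ((nodal univ t).eval 0)⁻¹ * nodal univ t := by
  have hω0 : (nodal univ t).eval 0 ≠ 0 :=
    eval_nodal_not_at_node fun i _ => (ht0 i).symm
  have hdivX := X_mul_divX_add (nodal univ t)
  rw [coeff_zero_eq_eval_zero] at hdivX
  rw [reciprocalInterpolant, ← C_1, ← mul_inv_cancel₀ hω0, C_mul]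
  linear_combination (-C ((nodal univ t).eval 0)⁻¹) * hdivX

theorem reciprocalInterpolant_eval_node (ht0 : ∀ i, t i ≠ 0) (i : Fin (q + 1)) :
    (reciprocalInterpolant t).eval (t i) = (t i)⁻¹ := by
  have h := congrArg (eval (t i)) (X_mul_reciprocalInterpolant ht0)
  simp only [eval_mul, eval_X, eval_sub, eval_one, eval_C,
    eval_nodal_at_node (mem_univ i), mul_zero, sub_zero] at h
  exact eq_inv_of_mul_eq_one_right h

theorem eq_divX_add_of_eval_node (ht : Function.Injective t) (ht0 : ∀ i, t i ≠ 0) {A B : ℝ[X]}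
    (hA : A.natDegree ≤ q) (hB : B.natDegree ≤ q + 1)
    (hAB : ∀ i, A.eval (t i) = (t i)⁻¹ * B.eval (t i)) :
    A = B.divX + C (B.eval 0) * reciprocalInterpolant t := by
  refine eq_of_natDegree_lt_card_of_eval_eq _ _ ht (fun i => ?_) ?_
  · have hdivX := congrArg (eval (t i)) (X_mul_divX_add B)
    rw [coeff_zero_eq_eval_zero] at hdivX
    simp only [eval_add, eval_mul, eval_X, eval_C] at hdivX
    rw [hAB, eval_add, eval_mul, eval_C, reciprocalInterpolant_eval_node ht0, ← hdivX]
    field_simp [ht0 i]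
  · rw [Fintype.card_fin, Nat.lt_succ_iff]
    refine max_le hA ((natDegree_add_le _ _).trans (max_le ?_ ?_))
    · rw [natDegree_divX_eq_natDegree_tsub_one]; omega
    · exact natDegree_C_mul_le _ _ |>.trans natDegree_reciprocalInterpolant_le

end ReciprocalInterpolant

section Quadrature

variable {q : ℕ} {ρ : ℝ} {t w : Fin (q + 1) → ℝ}

theorem IsGaussRadau01.weightedIntegral_eq_sum (h : IsGaussRadau01 q ρ t w) {P : ℝ[X]}
    (hP : P.natDegree ≤ 2 * q) : weightedIntegral ρ P = ∑ i, w i * P.eval (t i) :=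
  h.2.2.2.2 P hP

theorem IsGaussRadau01.weightedIntegral_mul_nodal (h : IsGaussRadau01 q ρ t w) {P : ℝ[X]}
    (hP : P.degree < q) : weightedIntegral ρ (P * nodal univ t) = 0 := by
  have hdeg : (P * nodal univ t).natDegree ≤ 2 * q := by
    rcases eq_or_ne P 0 with rfl | hP0
    · simp
    refine natDegree_mul_le.trans ?_
    rw [natDegree_nodal, card_univ, Fintype.card_fin]
    have := (natDegree_lt_iff_degree_lt hP0).mpr hP
    omega
  rw [h.weightedIntegral_eq_sum hdeg]
  exact sum_eq_zero fun i _ => by rw [eval_mul, eval_nodal_at_node (mem_univ i), mul_zero, mul_zero]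

/-- The right end node factors the nodal polynomial as `(X - 1) σ` with `σ` monic of degree `q`;
this turns `P * nodal` into `(X - 1) σ²` modulo polynomials the quadrature annihilates. -/
theorem IsGaussRadau01.weightedIntegral_mul_nodal_nonpos (h : IsGaussRadau01 q ρ t w)
    {P : ℝ[X]} (hmonic : P.Monic) (hdeg : P.natDegree = q) :
    weightedIntegral ρ (P * nodal univ t) ≤ 0 := by
  classical
  set σ := nodal (univ.erase (Fin.last q)) t
  have hω : nodal univ t = (X - C 1) * σ := by
    rw [nodal_eq_mul_nodal_erase (mem_univ (Fin.last q)), h.2.2.1]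
  have hσdeg : σ.natDegree = q := by simp [σ, natDegree_nodal]
  have hdiff : (P - σ).degree < q := by
    rw [← hdeg, ← degree_eq_natDegree hmonic.ne_zero]
    exact degree_sub_lt_left (by rw [degree_eq_natDegree hmonic.ne_zero,
      degree_eq_natDegree nodal_ne_zero, hdeg, hσdeg]) hmonic.ne_zero
      (by rw [hmonic.leadingCoeff, nodal_monic.leadingCoeff])
  have hsplit : P * nodal univ t = (P - σ) * nodal univ t + (X - C 1) * σ ^ 2 := by
    rw [hω]; ring
  rw [hsplit, map_add, h.weightedIntegral_mul_nodal hdiff, zero_add, weightedIntegral_apply]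
  refine setIntegral_nonpos measurableSet_Ioo fun x hx => ?_
  simp only [eval_mul, eval_sub, eval_X, eval_C, eval_pow]
  exact mul_nonpos_of_nonpos_of_nonneg
    (mul_nonpos_of_nonpos_of_nonneg (by linarith [hx.2]) (sq_nonneg _)) (Real.exp_pos _).le

theorem IsGaussRadau01.sum_le_sum_inv_mul (h : IsGaussRadau01 q ρ t w) {a : Fin (q + 1) → ℝ}
    (ha : ∀ i, 0 ≤ a i) : ∑ i, w i * a i ≤ ∑ i, w i * ((t i)⁻¹ * a i) :=
  sum_le_sum fun i _ => mul_le_mul_of_nonneg_left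
    (le_mul_of_one_le_left (ha i) ((one_le_inv₀ (h.1 i).1).mpr (h.1 i).2)) (h.2.2.2.1 i).le

/-- The sign of the whole estimate: integrating `L (2 - X L)` by parts (`L` the reciprocal
interpolant) turns the left side minus `L(0)` into `ρ ω(0)⁻² ∫ ω.divX ω e^{-2ρx}`. -/
theorem IsGaussRadau01.le_reciprocalInterpolant_eval_zero (h : IsGaussRadau01 q ρ t w)
    (hρ : 0 ≤ ρ) :
    Real.exp (-2 * ρ) / 2 + (∑ i, w i * ((t i)⁻¹ * (t i)⁻¹)) / 2 + ρ * ∑ i, w i * (t i)⁻¹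
      ≤ (reciprocalInterpolant t).eval 0 := by
  have ht0 : ∀ i, t i ≠ 0 := fun i => (h.1 i).1.ne'
  set ω := nodal univ t
  set ω0 := ω.eval 0
  set L := reciprocalInterpolant t
  have hXL : X * L = 1 - C ω0⁻¹ * ω := X_mul_reciprocalInterpolant ht0
  have hLdeg : L.natDegree ≤ q := natDegree_reciprocalInterpolant_le
  have hL1 : L.eval 1 = 1 := by
    rw [← h.2.2.1, reciprocalInterpolant_eval_node ht0, h.2.2.1, inv_one]
  have hsum1 : ∑ i, w i * (t i)⁻¹ = weightedIntegral ρ L := by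
    rw [h.weightedIntegral_eq_sum (by omega)]
    simp only [L, reciprocalInterpolant_eval_node ht0]
  have hsum2 : ∑ i, w i * ((t i)⁻¹ * (t i)⁻¹) = weightedIntegral ρ (L * L) := by
    rw [h.weightedIntegral_eq_sum (natDegree_mul_le.trans (by omega))]
    simp only [L, eval_mul, reciprocalInterpolant_eval_node ht0]
  have hderivL : weightedIntegral ρ (derivative L * ω) = 0 := by
    refine h.weightedIntegral_mul_nodal ((degree_derivative_lt ?_).trans_le
      (degree_le_of_natDegree_le hLdeg))
    rintro hL
    simp [hL] at hL1
  have hLω : weightedIntegral ρ (L * ω) = -ω0⁻¹ * weightedIntegral ρ (ω.divX * ω) := by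
    have hsmul : L * ω = (-ω0⁻¹) • (ω.divX * ω) := by
      rw [smul_eq_C_mul, C_neg]
      simp only [L, reciprocalInterpolant]
      ring
    rw [hsmul, map_smul, smul_eq_mul]
  have hdivX : weightedIntegral ρ (ω.divX * ω) ≤ 0 := by
    have hωdeg : ω.natDegree = q + 1 := by simp [ω, natDegree_nodal]
    have hmonic : ω.divX.Monic := nodal_monic.divX (by simp [natDegree_nodal])
    refine h.weightedIntegral_mul_nodal_nonpos hmonic ?_
    rw [natDegree_divX_eq_natDegree_tsub_one, hωdeg, Nat.add_sub_cancel]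
  have hF' : derivative (L * (2 - X * L)) = C (2 * ω0⁻¹) * (derivative L * ω) - L * L := by
    simp only [derivative_mul, derivative_sub, derivative_X, derivative_ofNat]
    rw [C_mul, map_ofNat]
    linear_combination (-2 * derivative L) * hXL
  have hF : L * (2 - X * L) = L + C ω0⁻¹ * (L * ω) := by
    linear_combination (-L) * hXL
  have hIBP := weightedIntegral_derivative ρ (L * (2 - X * L))
  simp only [eval_mul, eval_sub, eval_X, eval_ofNat, hL1, zero_mul, sub_zero] at hIBP
  rw [hF', hF, map_sub, map_add, ← smul_eq_C_mul, ← smul_eq_C_mul, map_smul, map_smul,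
    hderivL, hLω, smul_eq_mul, smul_eq_mul] at hIBP
  rw [hsum1, hsum2]
  nlinarith [mul_nonpos_of_nonneg_of_nonpos (mul_nonneg hρ (sq_nonneg ω0⁻¹)) hdivX]

/-- With `u = ‖p‖²` this is the second inequality at the nodes. Writing `u = u(0) + X r`, the
`r`-part cancels by integration by parts and the `u(0)`-part is `u(0)` times
`le_reciprocalInterpolant_eval_zero`. -/
theorem IsGaussRadau01.energy_le (h : IsGaussRadau01 q ρ t w) (hρ : 0 ≤ ρ) {u : ℝ[X]}
    (hu : u.natDegree ≤ 2 * q) (hu0 : 0 ≤ u.eval 0) :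
    1 / 2 * (u.eval 1 * Real.exp (-2 * ρ) + ∑ i, w i * ((t i)⁻¹ * ((t i)⁻¹ * u.eval (t i))))
        + ρ * ∑ i, w i * ((t i)⁻¹ * u.eval (t i))
      ≤ ∑ i, w i * ((t i)⁻¹ * ((derivative u).eval (t i) / 2))
        + ((derivative u).eval 0 / 2 + (reciprocalInterpolant t).eval 0 * u.eval 0) := by
  have ht0 : ∀ i, t i ≠ 0 := fun i => (h.1 i).1.ne'
  set r := u.divX
  set u0 := u.eval 0
  have hsplit : X * r + C u0 = u := by
    simpa only [coeff_zero_eq_eval_zero] using X_mul_divX_add u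
  have hu_eval : ∀ x, u.eval x = x * r.eval x + u0 := fun x => by
    simpa using (congrArg (eval x) hsplit).symm
  have hu'_eval : ∀ x, (derivative u).eval x = r.eval x + x * (derivative r).eval x := fun x => by
    simpa [add_comm] using (congrArg (fun P => (derivative P).eval x) hsplit).symm
  have hr : r.natDegree ≤ 2 * q := natDegree_divX_le.trans hu
  have hIBP := weightedIntegral_derivative ρ r
  rw [h.weightedIntegral_eq_sum hr,
    h.weightedIntegral_eq_sum ((natDegree_derivative_le r).trans (by omega))] at hIBP
  have hS2 : ∑ i, w i * ((t i)⁻¹ * ((t i)⁻¹ * u.eval (t i)))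
      = u0 * ∑ i, w i * ((t i)⁻¹ * (t i)⁻¹) + ∑ i, w i * ((t i)⁻¹ * r.eval (t i)) := by
    rw [mul_sum, ← sum_add_distrib]
    refine sum_congr rfl fun i _ => ?_
    rw [hu_eval]
    linear_combination (w i * (t i)⁻¹ * r.eval (t i)) * inv_mul_cancel₀ (ht0 i)
  have hS1 : ∑ i, w i * ((t i)⁻¹ * u.eval (t i))
      = u0 * ∑ i, w i * (t i)⁻¹ + ∑ i, w i * r.eval (t i) := by
    rw [mul_sum, ← sum_add_distrib]
    refine sum_congr rfl fun i _ => ?_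
    rw [hu_eval]
    linear_combination (w i * r.eval (t i)) * inv_mul_cancel₀ (ht0 i)
  have hS' : ∑ i, w i * ((t i)⁻¹ * ((derivative u).eval (t i) / 2))
      = (∑ i, w i * ((t i)⁻¹ * r.eval (t i)) + ∑ i, w i * (derivative r).eval (t i)) / 2 := by
    rw [← sum_add_distrib, sum_div]
    refine sum_congr rfl fun i _ => ?_
    rw [hu'_eval]
    linear_combination (w i * (derivative r).eval (t i) / 2) * inv_mul_cancel₀ (ht0 i)
  have hK := mul_le_mul_of_nonneg_left (h.le_reciprocalInterpolant_eval_zero hρ) hu0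
  rw [hS2, hS1, hS', hu_eval 1, hu'_eval 0]
  linarith

end Quadrature

section VectorPolynomials

variable {H : Type*} [NormedAddCommGroup H] [InnerProductSpace ℝ H]

theorem isPolyDeg_const (v : H) : IsPolyDeg 0 (fun _ => v) :=
  ⟨fun _ => v, fun s => by simp⟩

theorem IsPolyDeg.differentiable_s5 {q : ℕ} {f : ℝ → H} (hf : IsPolyDeg q f) :
    Differentiable ℝ f := by
  obtain ⟨c, hc⟩ := hf
  rw [funext hc]
  fun_prop

theorem IsPolyDeg.deriv {q : ℕ} {f : ℝ → H} (hf : IsPolyDeg q f) : IsPolyDeg q (deriv f) := by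
  obtain ⟨c, hc⟩ := hf
  refine ⟨Fin.snoc (fun j : Fin q => ((j : ℝ) + 1) • c j.succ) 0, fun s => ?_⟩
  have hd : HasDerivAt f (∑ i : Fin (q + 1), ((i : ℝ) * s ^ ((i : ℕ) - 1)) • c i) s := by
    rw [funext hc]
    exact HasDerivAt.fun_sum fun i _ => by
      simpa using (hasDerivAt_pow (i : ℕ) s).smul_const (c i)
  rw [hd.deriv, Fin.sum_univ_succ, Fin.sum_univ_castSucc]
  simp [Fin.snoc_castSucc, Fin.snoc_last, smul_smul, mul_comm]

theorem IsPolyDeg.exists_eval_eq_inner {m n : ℕ} {f g : ℝ → H} (hf : IsPolyDeg m f)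
    (hg : IsPolyDeg n g) : ∃ P : ℝ[X], P.natDegree ≤ m + n ∧ ∀ x, P.eval x = ⟪f x, g x⟫ := by
  obtain ⟨c, hc⟩ := hf
  obtain ⟨d, hd⟩ := hg
  refine ⟨∑ i, ∑ j, C ⟪c i, d j⟫ * X ^ ((i : ℕ) + j), ?_, fun x => ?_⟩
  · refine natDegree_sum_le_of_forall_le _ _ fun i _ =>
      natDegree_sum_le_of_forall_le _ _ fun j _ => (natDegree_C_mul_X_pow_le _ _).trans ?_
    have := i.is_le; have := j.is_le
    omega
  · rw [hc, hd, sum_inner]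
    simp only [eval_finsetSum, eval_mul, eval_C, eval_pow, eval_X, inner_sum,
      real_inner_smul_left, real_inner_smul_right, pow_add]
    exact sum_congr rfl fun i _ => sum_congr rfl fun j _ => by ring

theorem derivative_eval_eq_inner {f g : ℝ → H} {P : ℝ[X]} (hf : Differentiable ℝ f)
    (hg : Differentiable ℝ g) (hP : ∀ x, P.eval x = ⟪f x, g x⟫) (x : ℝ) :
    (derivative P).eval x = ⟪deriv f x, g x⟫ + ⟪f x, deriv g x⟫ := by
  rw [← Polynomial.deriv, funext hP, add_comm]
  exact ((hf x).hasDerivAt.inner ℝ (hg x).hasDerivAt).deriv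

theorem IsGaussRadau01.integral_inner_eq_sum {q : ℕ} {ρ : ℝ} {t w : Fin (q + 1) → ℝ}
    (h : IsGaussRadau01 q ρ t w) {f g : ℝ → H} (hf : IsPolyDeg q f) (hg : IsPolyDeg q g) :
    ∫ x in Set.Ioo (0 : ℝ) 1, ⟪f x, g x⟫ * Real.exp (-2 * ρ * x)
      = ∑ i, w i * ⟪f (t i), g (t i)⟫ := by
  obtain ⟨P, hPdeg, hP⟩ := hf.exists_eval_eq_inner hg
  simp only [← hP]
  exact h.weightedIntegral_eq_sum (by omega)

theorem inner_eval_zero_of_interpolates {q : ℕ} {t : Fin (q + 1) → ℝ}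
    (ht : Function.Injective t) (ht0 : ∀ i, t i ≠ 0) {p ptilde : ℝ → H} (hp : IsPolyDeg q p)
    (hpt : IsPolyDeg q ptilde) (hinterp : ∀ i, ptilde (t i) = (t i)⁻¹ • p (t i)) :
    ⟪p 0, ptilde 0⟫ = ⟪deriv p 0, p 0⟫ + (reciprocalInterpolant t).eval 0 * ⟪p 0, p 0⟫ := by
  obtain ⟨A, hAdeg, hA⟩ := hpt.exists_eval_eq_inner (isPolyDeg_const (p 0))
  obtain ⟨B, hBdeg, hB⟩ := hp.exists_eval_eq_inner (isPolyDeg_const (p 0))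
  have hAB := eq_divX_add_of_eval_node ht ht0 hAdeg (hBdeg.trans (Nat.le_succ q))
    fun i => by rw [hA, hB, hinterp, real_inner_smul_left]
  have hB' := derivative_eval_eq_inner hp.differentiable_s5
    (isPolyDeg_const (p 0)).differentiable_s5 hB 0
  rw [deriv_const, inner_zero_right, add_zero, ← coeff_zero_eq_eval_zero, coeff_derivative,
    zero_add, Nat.cast_zero, zero_add, mul_one] at hB'
  rw [real_inner_comm, ← hA, hAB, eval_add, eval_mul, eval_C, hB, ← coeff_zero_eq_eval_zero,
    coeff_divX, zero_add, hB', mul_comm]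

end VectorPolynomials

theorem stmt_5_general {H : Type*} [NormedAddCommGroup H] [InnerProductSpace ℝ H]
    (ρ : ℝ) (hρ : 0 < ρ) (q : ℕ)
    (t w : Fin (q + 1) → ℝ) (h : IsGaussRadau01 q ρ t w)
    (p ptilde : ℝ → H) (hp : IsPolyDeg q p) (hpt : IsPolyDeg q ptilde)
    (hinterp : ∀ i, ptilde (t i) = (t i)⁻¹ • p (t i)) :
    ((1 / 2) * (‖p 1‖ ^ 2 * Real.exp (-2 * ρ)
          + ∫ x in Set.Ioo (0 : ℝ) 1, ⟪p x, p x⟫ * Real.exp (-2 * ρ * x))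
        + ρ * ∫ x in Set.Ioo (0 : ℝ) 1, ⟪p x, p x⟫ * Real.exp (-2 * ρ * x)
      ≤ (1 / 2) * (‖p 1‖ ^ 2 * Real.exp (-2 * ρ)
          + ∫ x in Set.Ioo (0 : ℝ) 1, ⟪ptilde x, ptilde x⟫ * Real.exp (-2 * ρ * x))
        + ρ * ∫ x in Set.Ioo (0 : ℝ) 1, ⟪p x, ptilde x⟫ * Real.exp (-2 * ρ * x)) ∧
    ((1 / 2) * (‖p 1‖ ^ 2 * Real.exp (-2 * ρ)
          + ∫ x in Set.Ioo (0 : ℝ) 1, ⟪ptilde x, ptilde x⟫ * Real.exp (-2 * ρ * x))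
        + ρ * ∫ x in Set.Ioo (0 : ℝ) 1, ⟪p x, ptilde x⟫ * Real.exp (-2 * ρ * x)
      ≤ (∫ x in Set.Ioo (0 : ℝ) 1, ⟪deriv p x, ptilde x⟫ * Real.exp (-2 * ρ * x))
        + ⟪p 0, ptilde 0⟫) := by
  have ht0 : ∀ i, t i ≠ 0 := fun i => (h.1 i).1.ne'
  obtain ⟨U, hUdeg, hU⟩ := hp.exists_eval_eq_inner hp
  have hU0 : ∀ x, 0 ≤ U.eval x := fun x => hU x ▸ real_inner_self_nonneg
  have hU' : ∀ x, ⟪deriv p x, p x⟫ = (derivative U).eval x / 2 := fun x => by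
    rw [derivative_eval_eq_inner hp.differentiable_s5 hp.differentiable_s5 hU, real_inner_comm (p x)]
    ring
  rw [h.integral_inner_eq_sum hp hp, h.integral_inner_eq_sum hp hpt,
    h.integral_inner_eq_sum hpt hpt, h.integral_inner_eq_sum hp.deriv hpt,
    inner_eval_zero_of_interpolates h.2.1.injective ht0 hp hpt hinterp,
    ← real_inner_self_eq_norm_sq]
  simp only [hinterp, real_inner_smul_left, real_inner_smul_right, ← hU, hU']
  refine ⟨?_, h.energy_le hρ.le (by omega) (hU0 0)⟩
  have hsum := h.sum_le_sum_inv_mul fun i => hU0 (t i)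
  have hsum' := hsum.trans <| h.sum_le_sum_inv_mul fun i =>
    mul_nonneg (inv_nonneg.mpr (h.1 i).1.le) (hU0 (t i))
  linarith [mul_le_mul_of_nonneg_left hsum hρ.le]

/-- Lemma `lem:akmak`: for an `H`-valued polynomial `p` of degree `≤ q` and `p̃` the
Lagrange interpolant of `t ↦ p(t)/t` at the Gauß–Radau nodes,
`⟨p', p̃⟩_ρ + ⟨p(0), p̃(0)⟩ ≥ ½(|p(1)|² e^{-2ρ} + ⟨p̃,p̃⟩_ρ) + ρ⟨p,p̃⟩_ρ
  ≥ ½(|p(1)|² e^{-2ρ} + ⟨p,p⟩_ρ) + ρ⟨p,p⟩_ρ`,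
where `⟨a,b⟩_ρ = ∫₀¹ ⟨a(t),b(t)⟩_H e^{-2ρt} dt`. -/
theorem stmt_5 {H : Type*} [NormedAddCommGroup H] [InnerProductSpace ℝ H]
    (ρ : ℝ) (hρ : 0 < ρ) (q : ℕ) (hq : 1 ≤ q)
    (t w : Fin (q + 1) → ℝ) (h : IsGaussRadau01 q ρ t w)
    (p ptilde : ℝ → H) (hp : IsPolyDeg q p) (hpt : IsPolyDeg q ptilde)
    (hinterp : ∀ i, ptilde (t i) = (t i)⁻¹ • p (t i)) :
    ((1 / 2) * (‖p 1‖ ^ 2 * Real.exp (-2 * ρ)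
          + ∫ x in Set.Ioo (0 : ℝ) 1, ⟪p x, p x⟫ * Real.exp (-2 * ρ * x))
        + ρ * ∫ x in Set.Ioo (0 : ℝ) 1, ⟪p x, p x⟫ * Real.exp (-2 * ρ * x)
      ≤ (1 / 2) * (‖p 1‖ ^ 2 * Real.exp (-2 * ρ)
          + ∫ x in Set.Ioo (0 : ℝ) 1, ⟪ptilde x, ptilde x⟫ * Real.exp (-2 * ρ * x))
        + ρ * ∫ x in Set.Ioo (0 : ℝ) 1, ⟪p x, ptilde x⟫ * Real.exp (-2 * ρ * x)) ∧
    ((1 / 2) * (‖p 1‖ ^ 2 * Real.exp (-2 * ρ)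
          + ∫ x in Set.Ioo (0 : ℝ) 1, ⟪ptilde x, ptilde x⟫ * Real.exp (-2 * ρ * x))
        + ρ * ∫ x in Set.Ioo (0 : ℝ) 1, ⟪p x, ptilde x⟫ * Real.exp (-2 * ρ * x)
      ≤ (∫ x in Set.Ioo (0 : ℝ) 1, ⟪deriv p x, ptilde x⟫ * Real.exp (-2 * ρ * x))
        + ⟪p 0, ptilde 0⟫) :=
  stmt_5_general ρ hρ q t w h p ptilde hp hpt hinterp
end

section
/- Let ρ > 0, q ≥ 1, and let t₀ < ⋯ < t_q = 1 be the nodes of the right-sided Gauß–Radau quadrature with q+1 nodes on (0,1] with weight t ↦ e^{−2ρt} (exact for polynomials of degree ≤ 2q). Let Λ be the real polynomial of degree ≤ q with Λ(t_i) = 1/t_i for all i ∈ {0,…,q}. Then ∫₀¹ e^{−2ρt} Λ(t)(1 − tΛ(t)) dt ≥ 0. -/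
open MeasureTheory Real

/-- Lemma `lem:auxLambda`: if `Λ` is the polynomial of degree `≤ q` with `Λ(t_i) = 1/t_i`
at the Gauß–Radau nodes, then `∫₀¹ e^{-2ρt} Λ(t)(1 - tΛ(t)) dt ≥ 0`. -/
theorem stmt_6 (ρ : ℝ) (hρ : 0 < ρ) (q : ℕ) (hq : 1 ≤ q)
    (t w : Fin (q + 1) → ℝ) (h : IsGaussRadau01 q ρ t w)
    (Λ : Polynomial ℝ) (hΛdeg : Λ.natDegree ≤ q)
    (hΛ : ∀ i, Λ.eval (t i) = 1 / t i) :
    0 ≤ ∫ x in Set.Ioo (0 : ℝ) 1,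
        Real.exp (-2 * ρ * x) * (Λ.eval x * (1 - x * Λ.eval x)) := by
  classical
  obtain ⟨hmem, hsm, hlast, hwpos, hquad⟩ := h
  set a : ℝ := Λ.coeff q with ha
  set N : Polynomial ℝ := ∏ i, (Polynomial.X - Polynomial.C (t i)) with hNdef
  set M : Polynomial ℝ :=
    ∏ i ∈ Finset.univ.erase (Fin.last q), (Polynomial.X - Polynomial.C (t i)) with hMdef
  have hNM : N = M * (Polynomial.X - Polynomial.C 1) := by
    rw [hNdef, hMdef, ← hlast, Finset.prod_erase_mul _ _ (Finset.mem_univ _)]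
  have hNmonic : N.Monic := Polynomial.monic_prod_of_monic _ _
    (fun i _ => Polynomial.monic_X_sub_C _)
  have hMmonic : M.Monic := Polynomial.monic_prod_of_monic _ _
    (fun i _ => Polynomial.monic_X_sub_C _)
  have hNdeg : N.natDegree = q + 1 := by
    rw [hNdef, Polynomial.natDegree_prod _ _ (fun i _ => Polynomial.X_sub_C_ne_zero _)]
    simp [Polynomial.natDegree_X_sub_C]
  have hMdeg : M.natDegree = q := by
    rw [hMdef, Polynomial.natDegree_prod _ _ (fun i _ => Polynomial.X_sub_C_ne_zero _)]
    simp [Polynomial.natDegree_X_sub_C, Finset.card_erase_of_mem]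
  have hNroot : ∀ i, N.eval (t i) = 0 := by
    intro i
    rw [hNdef, Polynomial.eval_prod]
    exact Finset.prod_eq_zero (Finset.mem_univ i) (by simp)
  have htpos : ∀ i, 0 < t i := fun i => (hmem i).1
  -- key identity: 1 - X*Λ = C (-a) * N
  have hD : Polynomial.C 1 - Polynomial.X * Λ = Polynomial.C (-a) * N := by
    have hzero : (Polynomial.C 1 - Polynomial.X * Λ - Polynomial.C (-a) * N) = 0 := by
      apply Polynomial.eq_zero_of_natDegree_lt_card_of_eval_eq_zero _ hsm.injective
      · intro i
        simp only [Polynomial.eval_sub, Polynomial.eval_mul, Polynomial.eval_C,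
          Polynomial.eval_X, hNroot i, hΛ i, mul_zero, mul_one_div]
        rw [div_self (htpos i).ne']; ring
      · rw [Fintype.card_fin]
        have : (Polynomial.C 1 - Polynomial.X * Λ - Polynomial.C (-a) * N).natDegree ≤ q := by
          rw [Polynomial.natDegree_le_iff_coeff_eq_zero]
          intro m hm
          obtain ⟨k, rfl⟩ : ∃ k, m = k + 1 := ⟨m - 1, by omega⟩
          simp only [Polynomial.coeff_sub, Polynomial.coeff_C_mul, Polynomial.coeff_C,
            Polynomial.coeff_X_mul]
          rw [if_neg (by omega)]
          rcases eq_or_lt_of_le (Nat.succ_le_of_lt hm) with hmq | hmq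
          · have hkq : k = q := by omega
            have hNc : N.coeff (k + 1) = 1 := by
              rw [hkq]
              have := hNmonic.leadingCoeff
              rwa [Polynomial.leadingCoeff, hNdeg] at this
            rw [hNc, hkq]; ring
          · have hNc : N.coeff (k + 1) = 0 :=
              Polynomial.coeff_eq_zero_of_natDegree_lt (by omega)
            have hΛc : Λ.coeff k = 0 :=
              Polynomial.coeff_eq_zero_of_natDegree_lt (by omega)
            rw [hNc, hΛc]; ring
        omega
    exact sub_eq_zero.mp hzero
  set G : Polynomial ℝ := Λ - Polynomial.C a * M with hGdef
  have hGdeg : G.natDegree ≤ q - 1 := by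
    rw [Polynomial.natDegree_le_iff_coeff_eq_zero]
    intro m hm
    have hm' : q ≤ m := by omega
    simp only [hGdef, Polynomial.coeff_sub, Polynomial.coeff_C_mul]
    rcases eq_or_lt_of_le hm' with hmq | hmq
    · have hMc : M.coeff m = 1 := by
        rw [← hmq]
        have := hMmonic.leadingCoeff
        rwa [Polynomial.leadingCoeff, hMdeg] at this
      rw [hMc, ← hmq, ← ha]; ring
    · rw [Polynomial.coeff_eq_zero_of_natDegree_lt (show Λ.natDegree < m by omega),
        Polynomial.coeff_eq_zero_of_natDegree_lt (show M.natDegree < m by omega)]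
      ring
  set Q : Polynomial ℝ := Polynomial.C (-a) * (G * N) with hQdef
  have hQdeg : Q.natDegree ≤ 2 * q := by
    refine le_trans Polynomial.natDegree_mul_le ?_
    refine le_trans (add_le_add (Polynomial.natDegree_C _).le Polynomial.natDegree_mul_le) ?_
    omega
  have hQzero : ∫ x in Set.Ioo (0:ℝ) 1, Q.eval x * Real.exp (-2 * ρ * x) = 0 := by
    rw [hquad Q hQdeg]
    refine Finset.sum_eq_zero fun i _ => ?_
    simp [hQdef, hNroot i]
  have hpt : ∀ x : ℝ, Real.exp (-2 * ρ * x) * (Λ.eval x * (1 - x * Λ.eval x))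
      = Q.eval x * Real.exp (-2 * ρ * x)
        + Real.exp (-2 * ρ * x) * (a ^ 2 * ((M.eval x) ^ 2 * (1 - x))) := by
    intro x
    have h1 : 1 - x * Λ.eval x = -a * N.eval x := by
      have := congrArg (Polynomial.eval x) hD
      simpa using this
    have h2 : N.eval x = M.eval x * (x - 1) := by
      have := congrArg (Polynomial.eval x) hNM
      simpa using this
    simp only [hQdef, hGdef, Polynomial.eval_mul, Polynomial.eval_sub, Polynomial.eval_C,
      Polynomial.eval_neg]
    rw [h1, h2]
    ring
  have hcont : ∀ p : Polynomial ℝ,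
      MeasureTheory.IntegrableOn (fun x => p.eval x * Real.exp (-2 * ρ * x))
        (Set.Ioo (0:ℝ) 1) := by
    intro p
    have : Continuous fun x : ℝ => p.eval x * Real.exp (-2 * ρ * x) :=
      (p.continuous_aeval).mul ((continuous_const.mul continuous_id).rexp)
    exact (this.integrableOn_Icc (a := 0) (b := 1)).mono_set Set.Ioo_subset_Icc_self
  have hg : MeasureTheory.IntegrableOn
      (fun x => Real.exp (-2 * ρ * x) * (a ^ 2 * ((M.eval x) ^ 2 * (1 - x))))
      (Set.Ioo (0:ℝ) 1) := by
    have := hcont (Polynomial.C (a ^ 2) * (M ^ 2 * (Polynomial.C 1 - Polynomial.X)))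
    refine this.congr_fun ?_ measurableSet_Ioo
    intro x _
    simp only [Polynomial.eval_mul, Polynomial.eval_C, Polynomial.eval_pow,
      Polynomial.eval_sub, Polynomial.eval_X, Polynomial.eval_one]
    ring
  have hsplit : (∫ x in Set.Ioo (0:ℝ) 1,
        Real.exp (-2 * ρ * x) * (Λ.eval x * (1 - x * Λ.eval x)))
      = (∫ x in Set.Ioo (0:ℝ) 1, Q.eval x * Real.exp (-2 * ρ * x))
        + ∫ x in Set.Ioo (0:ℝ) 1,
            Real.exp (-2 * ρ * x) * (a ^ 2 * ((M.eval x) ^ 2 * (1 - x))) := by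
    simp_rw [hpt]
    exact MeasureTheory.integral_add (hcont Q) hg
  rw [hsplit, hQzero, zero_add]
  refine MeasureTheory.setIntegral_nonneg measurableSet_Ioo fun x hx => ?_
  have h1x : 0 ≤ 1 - x := by linarith [hx.2]
  positivity
end

section
/- Let q ∈ ℕ, w ∈ W and let (ω, r) be a right-sided w-Gauß–Radau quadrature of order q. Then: (1) the nodes r₀, …, r_q are pairwise distinct (so −1 ≤ r₀ < r₁ < ⋯ < r_q = 1); (2) for all j ∈ {0,…,q}: 0 < ω_j ≤ ∫_{−1}^1 w(x) dx; (3) for all j ∈ {0,…,q}: ω_j = ∫_{−1}^1 I_j(x) w(x) dx, where I_j(x) = ∏_{k ≠ j} (x − r_k)/(r_j − r_k) is the j-th Lagrange basis polynomial of the nodes. -/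
open MeasureTheory Real

/-- The class `W` of weighting functions: `w ∈ L¹(-1,1)` with `w > 0` almost everywhere. -/
def IsWeight (w : ℝ → ℝ) : Prop :=
  IntegrableOn w (Set.Ioo (-1 : ℝ) 1) ∧
    ∀ᵐ x ∂(volume.restrict (Set.Ioo (-1 : ℝ) 1)), 0 < w x

/-- A (right-sided) `w`-Gauß–Radau quadrature of order `q`: a pair `(ω, r)` with
`-1 ≤ r₀ ≤ r₁ ≤ ⋯ ≤ r_q = 1` such that `∫_{-1}^1 p w = Σ_j ω_j p(r_j)` for every
real polynomial `p` of degree at most `2q`. -/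
def IsGaussRadauQuad (q : ℕ) (w : ℝ → ℝ) (ω r : Fin (q + 1) → ℝ) : Prop :=
  (∀ j, r j ∈ Set.Icc (-1 : ℝ) 1) ∧ Monotone r ∧ r (Fin.last q) = 1 ∧
    ∀ p : Polynomial ℝ, p.natDegree ≤ 2 * q →
      ∫ x in Set.Ioo (-1 : ℝ) 1, p.eval x * w x = ∑ j, ω j * p.eval (r j)

/-! Testing a Gauß–Radau rule on `∏_{k ≠ i} (X - r_k)²`, which has degree `2q` and is
nonnegative, shows that no two nodes coincide: otherwise this polynomial would vanish at every
node while its `w`-integral is positive. With distinct nodes, the Lagrange basis polynomials `I_j`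
have degree `q`, so the rule is exact for `I_j` and `I_j²`; since both equal `δ_{jm}` at the node
`r_m`, this gives `ω_j = ∫ I_j w = ∫ I_j² w > 0`. Finally `∑ ω = ∫ w` bounds each weight
by `∫ w`. -/

open Polynomial Lagrange Finset

lemma Lagrange.eval_basis {F ι : Type*} [Field F] [DecidableEq ι] (s : Finset ι) (v : ι → F)
    (i : ι) (x : F) :
    (Lagrange.basis s v i).eval x = ∏ j ∈ s.erase i, (x - v j) / (v i - v j) := by
  simp only [Lagrange.basis, basisDivisor, eval_prod, eval_mul, eval_C, eval_sub, eval_X,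
    div_eq_inv_mul]

lemma MeasureTheory.integral_pos_of_ae_pos {α : Type*} [MeasurableSpace α] {μ : Measure α}
    [NeZero μ] {f : α → ℝ} (hf : Integrable f μ) (hpos : ∀ᵐ x ∂μ, 0 < f x) :
    0 < ∫ x, f x ∂μ := by
  have hnonneg : 0 ≤ᵐ[μ] f := hpos.mono fun _ hx => hx.le
  refine (integral_nonneg_of_ae hnonneg).lt_of_ne' fun hzero => ?_
  have : (ae μ).NeBot := ae_neBot.2 (NeZero.ne μ)
  obtain ⟨x, hx, hx0⟩ :=
    (hpos.and ((integral_eq_zero_iff_of_nonneg_ae hnonneg hf).1 hzero)).exists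
  exact hx.ne' hx0

lemma setIntegral_eval_mul_pos {a b : ℝ} (hab : a < b) {w : ℝ → ℝ}
    (hw : IntegrableOn w (Set.Ioo a b))
    (hwpos : ∀ᵐ x ∂(volume.restrict (Set.Ioo a b)), 0 < w x)
    {p : ℝ[X]} (hp : p ≠ 0) (hpnonneg : ∀ x ∈ Set.Ioo a b, 0 ≤ p.eval x) :
    0 < ∫ x in Set.Ioo a b, p.eval x * w x := by
  have : NeZero (volume.restrict (Set.Ioo a b)) := ⟨by simp [hab]⟩
  refine integral_pos_of_ae_pos (hw.continuousOn_mul_of_subset p.continuous.continuousOn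
    isCompact_Icc measurableSet_Ioo Set.Ioo_subset_Icc_self) ?_
  have hroots : ∀ᵐ x ∂(volume.restrict (Set.Ioo a b)), x ∉ {x | p.IsRoot x} :=
    ae_restrict_of_ae <|
      measure_eq_zero_iff_ae_notMem.1 ((finite_setOfPred_isRoot hp).measure_zero _)
  filter_upwards [hwpos, hroots, ae_restrict_mem measurableSet_Ioo] with x hwx hx hmem
  exact mul_pos ((hpnonneg x hmem).lt_of_ne' hx) hwx

namespace IsGaussRadauQuad

variable {q : ℕ} {w : ℝ → ℝ} {ω r : Fin (q + 1) → ℝ}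

lemma weight_eq_integral_of_eval_nodes (h : IsGaussRadauQuad q w ω r) {p : ℝ[X]}
    (hp : p.natDegree ≤ 2 * q) {j : Fin (q + 1)} (hpj : p.eval (r j) = 1)
    (hpm : ∀ m, m ≠ j → p.eval (r m) = 0) :
    ω j = ∫ x in Set.Ioo (-1 : ℝ) 1, p.eval x * w x := by
  rw [h.2.2.2 p hp, Finset.sum_eq_single_of_mem j (mem_univ j)
    fun m _ hm => by rw [hpm m hm, mul_zero], hpj, mul_one]

lemma sum_weights (h : IsGaussRadauQuad q w ω r) :
    ∑ j, ω j = ∫ x in Set.Ioo (-1 : ℝ) 1, w x := by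
  simpa using (h.2.2.2 1 (by simp)).symm

lemma injective (hw : IsWeight w) (h : IsGaussRadauQuad q w ω r) : Function.Injective r := by
  intro i j hij
  by_contra hne
  let p : ℝ[X] := nodal (univ.erase i) r ^ 2
  have hp : p.natDegree ≤ 2 * q := by
    simp [p, natDegree_pow, natDegree_nodal, card_erase_of_mem, mul_comm]
  -- `r i = r j` is a root of `p` as well, since `j ≠ i`.
  have hroot : ∀ m, p.eval (r m) = 0 := by
    intro m
    obtain ⟨m', hm', hrm⟩ : ∃ m' ∈ univ.erase i, r m = r m' := by
      rcases eq_or_ne m i with rfl | hmi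
      · exact ⟨j, mem_erase.2 ⟨Ne.symm hne, mem_univ j⟩, hij⟩
      · exact ⟨m, mem_erase.2 ⟨hmi, mem_univ m⟩, rfl⟩
    simp [p, hrm, eval_nodal_at_node hm']
  have hpos : 0 < ∫ x in Set.Ioo (-1 : ℝ) 1, p.eval x * w x :=
    setIntegral_eval_mul_pos (by norm_num) hw.1 hw.2 (pow_ne_zero 2 nodal_ne_zero)
      fun x _ => by simpa [p] using sq_nonneg ((nodal (univ.erase i) r).eval x)
  simp [h.2.2.2 p hp, hroot] at hpos

lemma weight_eq_integral_basis (h : IsGaussRadauQuad q w ω r) (hr : Function.Injective r)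
    (j : Fin (q + 1)) :
    ω j = ∫ x in Set.Ioo (-1 : ℝ) 1, (Lagrange.basis univ r j).eval x * w x := by
  have hdeg : (Lagrange.basis univ r j).natDegree = q := by
    simp [natDegree_basis hr.injOn (mem_univ j)]
  exact h.weight_eq_integral_of_eval_nodes (by omega) (eval_basis_self hr.injOn (mem_univ j))
    fun m hm => eval_basis_of_ne hm.symm (mem_univ m)

lemma weight_pos (hw : IsWeight w) (h : IsGaussRadauQuad q w ω r) (j : Fin (q + 1)) :
    0 < ω j := by
  have hr := h.injective hw
  have hdeg : (Lagrange.basis univ r j ^ 2).natDegree ≤ 2 * q := by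
    simp [natDegree_pow, natDegree_basis hr.injOn (mem_univ j), mul_comm]
  rw [h.weight_eq_integral_of_eval_nodes hdeg
    (by simp [eval_basis_self hr.injOn (mem_univ j)])
    fun m hm => by simp [eval_basis_of_ne hm.symm (mem_univ m)]]
  exact setIntegral_eval_mul_pos (by norm_num) hw.1 hw.2
    (pow_ne_zero 2 (basis_ne_zero hr.injOn (mem_univ j))) fun x _ => by simp [sq_nonneg]

end IsGaussRadauQuad

/-- Proposition `p:uni` (1)–(3): for a `w`-Gauß–Radau quadrature the nodes are pairwise
distinct, the weights are positive and bounded by `∫ w`, and the weights are given by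
integrating the Lagrange basis polynomials. -/
theorem stmt_12 (q : ℕ) (w : ℝ → ℝ) (hw : IsWeight w)
    (ω r : Fin (q + 1) → ℝ) (h : IsGaussRadauQuad q w ω r) :
    StrictMono r ∧
    (∀ j, 0 < ω j ∧ ω j ≤ ∫ x in Set.Ioo (-1 : ℝ) 1, w x) ∧
    (∀ j, ω j = ∫ x in Set.Ioo (-1 : ℝ) 1,
        (∏ k ∈ Finset.univ.erase j, (x - r k) / (r j - r k)) * w x) := by
  have hr := h.injective hw
  refine ⟨h.2.1.strictMono_of_injective hr, fun j => ⟨h.weight_pos hw j, ?_⟩, fun j => ?_⟩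
  · rw [← h.sum_weights]
    exact single_le_sum (fun m _ => (h.weight_pos hw m).le) (mem_univ j)
  · simpa only [Lagrange.eval_basis] using h.weight_eq_integral_basis hr j
end
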